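/- arXiv:1704.03649 — 2 statements merged into one kernel-verified Lean document; each statement's English description precedes it below -/
import Mathlib

section
/- (Inf-sup condition of Lemma 3.3, limiting case t = 0, in abstract form.) Let 𝕄 be a real normed space, Θ a real inner product space, W a real vector space, G : W → Θ a linear map, and d : 𝕄 → Θ → ℝ a bilinear form. Let c₁, c̲ ∈ (0, 1] and c̄ ≥ 1 be constants. Fix θ ∈ Θ and w ∈ W, and suppose M̃ ∈ 𝕄 satisfies d(M̃, θ) ≥ c₁ ‖M̃‖ ‖θ‖ and c̲ ‖θ‖ ≤ ‖M̃‖ ≤ c̄ ‖θ‖. Then, setting M := (2/(c₁ c̲)) M̃ and γ := G w − θ, one has d(M, θ) + ⟪γ, G w − θ⟫ ≥ (c₁ c̲ / (√2 c̄)) · √(‖M‖² + ‖γ‖²) · √(‖θ‖² + ‖G w‖²/2). -/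
/-!
The test pair `(M, γ) = ((2 / (c₁ c̲)) M̃, G w - θ)` makes the left-hand side at least
`2 ‖θ‖² + ‖G w - θ‖²`: the inf-sup bound and `c̲ ‖θ‖ ≤ ‖M̃‖` give `d(M̃, θ) ≥ c₁ c̲ ‖θ‖²`.
This quantity dominates both `‖θ‖² + ‖G w‖² / 2` (triangle inequality for `G w = (G w - θ) + θ`)
and `(c₁ c̲ / (√2 c̄))² (‖M‖² + ‖γ‖²)` (from `‖M̃‖ ≤ c̄ ‖θ‖`), so it dominates the product of the
square roots.
-/

open RealInnerProductSpace Real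

lemma mul_sqrt_mul_sqrt_le {K X Y Z : ℝ} (hK : 0 ≤ K) (hZ : 0 ≤ Z)
    (hX : K ^ 2 * X ≤ Z) (hY : Y ≤ Z) : K * √X * √Y ≤ Z := by
  have hKX : K * √X ≤ √Z := by
    rw [← sqrt_sq hK, ← sqrt_mul (sq_nonneg K)]
    exact sqrt_le_sqrt hX
  calc K * √X * √Y ≤ √Z * √Z := mul_le_mul hKX (sqrt_le_sqrt hY) (sqrt_nonneg _) (sqrt_nonneg _)
    _ = Z := mul_self_sqrt hZ

lemma sq_norm_div_two_le {E : Type*} [SeminormedAddCommGroup E] (x y : E) :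
    ‖x‖ ^ 2 / 2 ≤ ‖y‖ ^ 2 + ‖x - y‖ ^ 2 := by
  have hxy : ‖x‖ ≤ ‖x - y‖ + ‖y‖ := norm_le_norm_sub_add x y
  have := (pow_le_pow_left₀ (norm_nonneg x) hxy 2).trans (add_sq_le (a := ‖x - y‖) (b := ‖y‖))
  linarith

lemma sq_div_sqrt_two_mul_mul_le {x u a m r : ℝ} (hx : 0 < x) (hx1 : x ≤ 1) (hu : 1 ≤ u)
    (hm0 : 0 ≤ m) (hm : m ≤ 2 * u / x * a) :
    (x / (√2 * u)) ^ 2 * (m ^ 2 + r ^ 2) ≤ 2 * a ^ 2 + r ^ 2 := by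
  have hu0 : 0 < u := one_pos.trans_le hu
  have hK2 : (x / (√2 * u)) ^ 2 = x ^ 2 / (2 * u ^ 2) := by
    rw [div_pow, mul_pow, sq_sqrt zero_le_two]
  have hKm : x ^ 2 / (2 * u ^ 2) * m ^ 2 ≤ 2 * a ^ 2 := by
    calc x ^ 2 / (2 * u ^ 2) * m ^ 2 ≤ x ^ 2 / (2 * u ^ 2) * (2 * u / x * a) ^ 2 := by gcongr
      _ = 2 * a ^ 2 := by field_simp
  have hK1 : x ^ 2 / (2 * u ^ 2) ≤ 1 := by
    rw [div_le_one (by positivity)]; nlinarith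
  rw [hK2, mul_add]
  nlinarith [sq_nonneg r]

theorem infsup_B_limit_case
    {M𝕄 : Type*} [NormedAddCommGroup M𝕄] [NormedSpace ℝ M𝕄]
    {Θ : Type*} [NormedAddCommGroup Θ] [InnerProductSpace ℝ Θ]
    {W : Type*} [AddCommGroup W] [Module ℝ W]
    (G : W →ₗ[ℝ] Θ) (d : M𝕄 →ₗ[ℝ] Θ →ₗ[ℝ] ℝ)
    (c₁ cl cu : ℝ) (hc₁ : 0 < c₁) (hc₁' : c₁ ≤ 1) (hcl : 0 < cl) (hcl' : cl ≤ 1)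
    (hcu : 1 ≤ cu)
    (θ : Θ) (w : W) (Mtil : M𝕄)
    (hinfsup : d Mtil θ ≥ c₁ * ‖Mtil‖ * ‖θ‖)
    (hlo : cl * ‖θ‖ ≤ ‖Mtil‖) (hhi : ‖Mtil‖ ≤ cu * ‖θ‖) :
    d ((2 / (c₁ * cl)) • Mtil) θ + ⟪G w - θ, G w - θ⟫ ≥
      (c₁ * cl / (Real.sqrt 2 * cu)) *
        Real.sqrt (‖(2 / (c₁ * cl)) • Mtil‖ ^ 2 + ‖G w - θ‖ ^ 2) *
        Real.sqrt (‖θ‖ ^ 2 + ‖G w‖ ^ 2 / 2) := by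
  have hc : 0 < c₁ * cl := mul_pos hc₁ hcl
  have hnormM : ‖(2 / (c₁ * cl)) • Mtil‖ = 2 / (c₁ * cl) * ‖Mtil‖ := by
    rw [norm_smul, norm_of_nonneg (by positivity)]
  have hlower : 2 * ‖θ‖ ^ 2 + ‖G w - θ‖ ^ 2 ≤ d ((2 / (c₁ * cl)) • Mtil) θ + ⟪G w - θ, G w - θ⟫ :=
    calc 2 * ‖θ‖ ^ 2 + ‖G w - θ‖ ^ 2
        = 2 / (c₁ * cl) * (c₁ * (cl * ‖θ‖) * ‖θ‖) + ‖G w - θ‖ ^ 2 := by field_simp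
      _ ≤ 2 / (c₁ * cl) * (c₁ * ‖Mtil‖ * ‖θ‖) + ‖G w - θ‖ ^ 2 := by gcongr
      _ ≤ 2 / (c₁ * cl) * d Mtil θ + ‖G w - θ‖ ^ 2 := by gcongr
      _ = d ((2 / (c₁ * cl)) • Mtil) θ + ⟪G w - θ, G w - θ⟫ := by
        rw [map_smul, LinearMap.smul_apply, smul_eq_mul, real_inner_self_eq_norm_sq]
  have hM : (c₁ * cl / (√2 * cu)) ^ 2 * (‖(2 / (c₁ * cl)) • Mtil‖ ^ 2 + ‖G w - θ‖ ^ 2)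
      ≤ 2 * ‖θ‖ ^ 2 + ‖G w - θ‖ ^ 2 := by
    refine sq_div_sqrt_two_mul_mul_le hc (mul_le_one₀ hc₁' hcl.le hcl') hcu (norm_nonneg _) ?_
    rw [hnormM, div_mul_eq_mul_div, div_mul_eq_mul_div, mul_assoc]
    gcongr
  have hw : ‖θ‖ ^ 2 + ‖G w‖ ^ 2 / 2 ≤ 2 * ‖θ‖ ^ 2 + ‖G w - θ‖ ^ 2 := by
    linarith [sq_norm_div_two_le (G w) θ, sq_nonneg ‖θ‖]
  exact (mul_sqrt_mul_sqrt_le (by positivity) (by positivity) hM hw).trans hlower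
end

section
/- (Inf-sup condition of Lemma 3.6, positive thickness t > 0, in abstract form.) Let 𝕄 be a real normed space, V a real inner product space, N : V → ℝ a function with ‖v‖ ≤ N(v) for all v ∈ V, W a real normed space, G : W → V a linear map, and c_F ≥ 0 a constant with ‖w‖² ≤ (1 + c_F²) ‖G w‖² for all w ∈ W. Let d : 𝕄 → V → ℝ be a bilinear form and c₁, c̲ ∈ (0, 1], c̄ ≥ 1 constants. Fix t with 0 < t ≤ 1, θ ∈ V and w ∈ W, and suppose M ∈ 𝕄 satisfies d(M, θ) ≥ c₁ ‖M‖ N(θ) and c̲ N(θ) ≤ ‖M‖ ≤ c̄ N(θ). Then, setting γ := t⁻² (G w − θ), one has d(M, θ) + ⟪γ, G w − θ⟫ ≥ (c₁ c̲ / (c̄ √(1 + 2(1 + c_F²)))) · √(‖M‖² + t² ‖γ‖²) · √(N(θ)² + ‖w‖² + t⁻² ‖G w − θ‖²). -/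
/-!
Test with the shear stress `γ = t⁻² (G w - θ)` and put `X = N(θ)² + t⁻² ‖G w - θ‖²`.
Then the form equals `d(M, θ) + t⁻² ‖G w - θ‖² ≥ c₁ c̲ X`, while the squares of the two
`t`-dependent norms are at most `c̄² X` and `(1 + 2 (1 + c_F²)) X`; the second bound combines
the Friedrichs inequality, `‖G w‖² ≤ 2 (‖G w - θ‖² + ‖θ‖²)` and `1 ≤ t⁻²`.
-/

open RealInnerProductSpace Real

lemma sqrt_mul_sqrt_le_of_le_sq_mul {A B a b X : ℝ} (ha : 0 ≤ a) (hb : 0 ≤ b) (hX : 0 ≤ X)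
    (hA : A ≤ a ^ 2 * X) (hB : B ≤ b ^ 2 * X) :
    √A * √B ≤ a * b * X := by
  have sqrt_le {C c : ℝ} (hc : 0 ≤ c) (hC : C ≤ c ^ 2 * X) : √C ≤ c * √X := by
    calc √C ≤ √(c ^ 2 * X) := sqrt_le_sqrt hC
      _ = c * √X := by rw [sqrt_mul (sq_nonneg c), sqrt_sq hc]
  calc √A * √B ≤ (a * √X) * (b * √X) :=
        mul_le_mul (sqrt_le ha hA) (sqrt_le hb hB) (sqrt_nonneg _) (by positivity)
    _ = a * b * X := by rw [mul_mul_mul_comm, mul_self_sqrt hX]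

lemma norm_sq_le_two_mul_norm_sub_sq_add_norm_sq {E : Type*} [SeminormedAddCommGroup E]
    (x y : E) : ‖x‖ ^ 2 ≤ 2 * (‖x - y‖ ^ 2 + ‖y‖ ^ 2) := by
  calc ‖x‖ ^ 2 ≤ (‖x - y‖ + ‖y‖) ^ 2 := by
        gcongr
        simpa using norm_add_le (x - y) y
    _ ≤ 2 * (‖x - y‖ ^ 2 + ‖y‖ ^ 2) := add_sq_le

lemma sq_add_norm_sq_add_mul_norm_sub_sq_le {E F : Type*} [SeminormedAddCommGroup E]
    [SeminormedAddCommGroup F] {w : E} {u θ : F} {n c s : ℝ} (hθ : ‖θ‖ ≤ n)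
    (hw : ‖w‖ ^ 2 ≤ c * ‖u‖ ^ 2) (hc : 0 ≤ c) (hs : 1 ≤ s) :
    n ^ 2 + ‖w‖ ^ 2 + s * ‖u - θ‖ ^ 2 ≤ (1 + 2 * c) * (n ^ 2 + s * ‖u - θ‖ ^ 2) := by
  have hu : ‖u‖ ^ 2 ≤ 2 * (s * ‖u - θ‖ ^ 2 + n ^ 2) :=
    calc ‖u‖ ^ 2 ≤ 2 * (‖u - θ‖ ^ 2 + ‖θ‖ ^ 2) :=
          norm_sq_le_two_mul_norm_sub_sq_add_norm_sq u θ
      _ ≤ 2 * (s * ‖u - θ‖ ^ 2 + n ^ 2) := by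
        gcongr
        exact le_mul_of_one_le_left (sq_nonneg _) hs
  nlinarith [mul_le_mul_of_nonneg_left hu hc]

lemma sq_mul_norm_inv_sq_smul_sq {E : Type*} [SeminormedAddCommGroup E] [NormedSpace ℝ E]
    {t : ℝ} (ht : t ≠ 0) (v : E) : t ^ 2 * ‖(t⁻¹ ^ 2) • v‖ ^ 2 = t⁻¹ ^ 2 * ‖v‖ ^ 2 := by
  rw [norm_smul, norm_pow, norm_inv, Real.norm_eq_abs, inv_pow, sq_abs]
  field_simp

theorem infsup_B_positive_thickness_general
    {M𝕄 : Type*} [NormedAddCommGroup M𝕄] [NormedSpace ℝ M𝕄]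
    {V : Type*} [NormedAddCommGroup V] [InnerProductSpace ℝ V]
    {W : Type*} [NormedAddCommGroup W] [NormedSpace ℝ W]
    (N : V → ℝ) (hN : ∀ v : V, ‖v‖ ≤ N v)
    (G : W →ₗ[ℝ] V)
    (cF : ℝ)
    (hFriedrichs : ∀ w : W, ‖w‖ ^ 2 ≤ (1 + cF ^ 2) * ‖G w‖ ^ 2)
    (d : M𝕄 →ₗ[ℝ] V →ₗ[ℝ] ℝ)
    (c₁ cl cu : ℝ) (hc₁ : 0 < c₁) (hc₁' : c₁ ≤ 1) (hcl : 0 < cl) (hcl' : cl ≤ 1)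
    (hcu : 1 ≤ cu)
    (t : ℝ) (ht : 0 < t) (ht' : t ≤ 1)
    (θ : V) (w : W) (M : M𝕄)
    (hinfsup : d M θ ≥ c₁ * ‖M‖ * N θ)
    (hlo : cl * N θ ≤ ‖M‖) (hhi : ‖M‖ ≤ cu * N θ) :
    d M θ + ⟪(t⁻¹ ^ 2) • (G w - θ), G w - θ⟫ ≥
      (c₁ * cl / (cu * Real.sqrt (1 + 2 * (1 + cF ^ 2)))) *
        Real.sqrt (‖M‖ ^ 2 + t ^ 2 * ‖(t⁻¹ ^ 2) • (G w - θ)‖ ^ 2) *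
        Real.sqrt (N θ ^ 2 + ‖w‖ ^ 2 + t⁻¹ ^ 2 * ‖G w - θ‖ ^ 2) := by
  set s := t⁻¹ ^ 2
  set v := G w - θ
  set C := 1 + 2 * (1 + cF ^ 2)
  set X := N θ ^ 2 + s * ‖v‖ ^ 2
  have hs : 1 ≤ s := one_le_pow₀ ((one_le_inv₀ ht).mpr ht')
  have hNθ : 0 ≤ N θ := (norm_nonneg θ).trans (hN θ)
  have hlower : c₁ * cl * X ≤ d M θ + s * ‖v‖ ^ 2 := by
    have hc₁cl : c₁ * cl ≤ 1 := mul_le_one₀ hc₁' hcl.le hcl'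
    nlinarith [mul_le_mul_of_nonneg_left hlo (mul_nonneg hc₁.le hNθ),
      mul_le_mul_of_nonneg_right hc₁cl (by positivity : 0 ≤ s * ‖v‖ ^ 2)]
  have hMbound : ‖M‖ ^ 2 + s * ‖v‖ ^ 2 ≤ cu ^ 2 * X := by
    nlinarith [pow_le_pow_left₀ (norm_nonneg M) hhi 2, one_le_pow₀ (n := 2) hcu,
      (by positivity : 0 ≤ s * ‖v‖ ^ 2)]
  have hwbound : N θ ^ 2 + ‖w‖ ^ 2 + s * ‖v‖ ^ 2 ≤ √C ^ 2 * X := by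
    rw [sq_sqrt (by positivity)]
    exact sq_add_norm_sq_add_mul_norm_sub_sq_le (hN θ) (hFriedrichs w) (by positivity) hs
  rw [real_inner_smul_left, real_inner_self_eq_norm_sq,
    sq_mul_norm_inv_sq_smul_sq ht.ne']
  have hcu0 : 0 < cu := zero_lt_one.trans_le hcu
  calc c₁ * cl / (cu * √C) * √(‖M‖ ^ 2 + s * ‖v‖ ^ 2) * √(N θ ^ 2 + ‖w‖ ^ 2 + s * ‖v‖ ^ 2)
      ≤ c₁ * cl / (cu * √C) * (cu * √C * X) := by
        rw [mul_assoc]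
        exact mul_le_mul_of_nonneg_left
          (sqrt_mul_sqrt_le_of_le_sq_mul hcu0.le (sqrt_nonneg C) (by positivity) hMbound hwbound)
          (by positivity)
    _ = c₁ * cl * X := by
        have : 0 < √C := sqrt_pos.mpr (by positivity)
        field_simp
    _ ≤ d M θ + s * ‖v‖ ^ 2 := hlower

theorem infsup_B_positive_thickness
    {M𝕄 : Type*} [NormedAddCommGroup M𝕄] [NormedSpace ℝ M𝕄]
    {V : Type*} [NormedAddCommGroup V] [InnerProductSpace ℝ V]
    {W : Type*} [NormedAddCommGroup W] [NormedSpace ℝ W]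
    (N : V → ℝ) (hN : ∀ v : V, ‖v‖ ≤ N v)
    (G : W →ₗ[ℝ] V)
    (cF : ℝ) (hcF : 0 ≤ cF)
    (hFriedrichs : ∀ w : W, ‖w‖ ^ 2 ≤ (1 + cF ^ 2) * ‖G w‖ ^ 2)
    (d : M𝕄 →ₗ[ℝ] V →ₗ[ℝ] ℝ)
    (c₁ cl cu : ℝ) (hc₁ : 0 < c₁) (hc₁' : c₁ ≤ 1) (hcl : 0 < cl) (hcl' : cl ≤ 1)
    (hcu : 1 ≤ cu)
    (t : ℝ) (ht : 0 < t) (ht' : t ≤ 1)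
    (θ : V) (w : W) (M : M𝕄)
    (hinfsup : d M θ ≥ c₁ * ‖M‖ * N θ)
    (hlo : cl * N θ ≤ ‖M‖) (hhi : ‖M‖ ≤ cu * N θ) :
    d M θ + ⟪(t⁻¹ ^ 2) • (G w - θ), G w - θ⟫ ≥
      (c₁ * cl / (cu * Real.sqrt (1 + 2 * (1 + cF ^ 2)))) *
        Real.sqrt (‖M‖ ^ 2 + t ^ 2 * ‖(t⁻¹ ^ 2) • (G w - θ)‖ ^ 2) *
        Real.sqrt (N θ ^ 2 + ‖w‖ ^ 2 + t⁻¹ ^ 2 * ‖G w - θ‖ ^ 2) :=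
  infsup_B_positive_thickness_general N hN G cF hFriedrichs d c₁ cl cu hc₁ hc₁' hcl hcl' hcu t ht
    ht' θ w M hinfsup hlo hhi
end
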